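/- Let $s \in \mathbb{R}_{\ge 0}$, $\eta \in (0,1)$, and let $O$ be a Hermitian operator on a finite-dimensional Hilbert space with all eigenvalues in $\{0\} \cup [\eta, 1]$. Let $\Pi$ be the orthogonal projector onto the kernel of $O$. Then $T_{\eta,s}(O)\,\Pi = \Pi$ and $\|T_{\eta,s}(O) - \Pi\| \le 2 e^{-2 s \sqrt{\eta}}$, where $T_{\eta,s}(x) = T_{\lceil s\rceil}\big(\frac{2(1-x)}{1-\eta}-1\big) / T_{\lceil s\rceil}\big(\frac{2}{1-\eta}-1\big)$ and $T_j$ is the Chebyshev polynomial of the first kind. -/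

import Mathlib

/-!
Diagonalize `O` in an orthonormal eigenbasis. On `ker O` both `T_{η,s}(O)` and `Π` act as the
identity because `T_{η,s}(0) = 1`; on an eigenvector with eigenvalue `λ ∈ [η, 1]`, `Π` vanishes
and `T_{η,s}(O)` acts by `T_{η,s}(λ)`. The affine change of variables maps `[η, 1]` onto
`[-1, 1]`, where `|T_n| ≤ 1`, while the normalising value is
`T_n((1 + η) / (1 - η)) = cosh (n t)` with `e^t = (1 + √η) / (1 - √η) ≥ e^{2√η}`.
-/

open Polynomial

/-- The rescaled and shifted Chebyshev polynomial `T_{η,s}` as a real polynomial. -/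
noncomputable def chebPoly (η s : ℝ) : Polynomial ℝ :=
  Polynomial.C (((Polynomial.Chebyshev.T ℝ ⌈s⌉₊).eval (2 / (1 - η) - 1))⁻¹) *
    ((Polynomial.Chebyshev.T ℝ ⌈s⌉₊).comp (Polynomial.C (2 / (1 - η)) * (1 - X) - 1))

open Real Polynomial.Chebyshev

lemma two_mul_le_log_one_add_div_one_sub {u : ℝ} (h0 : 0 ≤ u) (h1 : u < 1) :
    2 * u ≤ log ((1 + u) / (1 - u)) := by
  rw [log_div (by linarith) (by linarith)]
  have hsum := hasSum_log_sub_log_of_abs_lt_one (abs_lt.mpr ⟨by linarith, h1⟩)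
  simpa using le_hasSum hsum 0 fun k _ => by positivity

lemma Polynomial.Chebyshev.exp_le_two_mul_eval_T_real {u : ℝ} (h0 : 0 ≤ u) (h1 : u < 1)
    (n : ℕ) : exp (2 * n * u) ≤ 2 * (T ℝ n).eval (2 / (1 - u ^ 2) - 1) := by
  set t := log ((1 + u) / (1 - u))
  have hcosh : cosh t = 2 / (1 - u ^ 2) - 1 := by
    have h1u : 1 - u ≠ 0 := by linarith
    have h1u' : 1 + u ≠ 0 := by linarith
    rw [cosh_log (div_pos (by linarith) (by linarith)), show 1 - u ^ 2 = (1 - u) * (1 + u) by ring]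
    field_simp
    ring
  have hexp : exp (2 * n * u) ≤ exp (n * t) := by
    rw [show 2 * (n : ℝ) * u = n * (2 * u) by ring]
    gcongr
    exact two_mul_le_log_one_add_div_one_sub h0 h1
  rw [← hcosh, T_real_cosh, cosh_eq]
  push_cast
  linarith [exp_pos (-(n * t))]

lemma chebPoly_eval (η s x : ℝ) :
    (chebPoly η s).eval x =
      (T ℝ ⌈s⌉₊).eval (2 / (1 - η) * (1 - x) - 1) / (T ℝ ⌈s⌉₊).eval (2 / (1 - η) - 1) := by
  simp [chebPoly, eval_comp, div_eq_inv_mul]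

lemma one_le_eval_T_two_div_one_sub_sub_one {η : ℝ} (h0 : 0 ≤ η) (h1 : η < 1) (n : ℤ) :
    1 ≤ (T ℝ n).eval (2 / (1 - η) - 1) := by
  apply one_le_eval_T_real
  rw [le_sub_iff_add_le, le_div_iff₀ (by linarith)]
  linarith

lemma chebPoly_eval_zero {η : ℝ} (h0 : 0 ≤ η) (h1 : η < 1) (s : ℝ) :
    (chebPoly η s).eval 0 = 1 := by
  rw [chebPoly_eval, sub_zero, mul_one]
  exact div_self (by linarith [one_le_eval_T_two_div_one_sub_sub_one h0 h1 ⌈s⌉₊])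

lemma abs_chebPoly_eval_le {η s x : ℝ} (h0 : 0 ≤ η) (h1 : η < 1) (hx : x ∈ Set.Icc η 1) :
    |(chebPoly η s).eval x| ≤ 2 * exp (-2 * s * √η) := by
  set n := ⌈s⌉₊
  set D := (T ℝ n).eval (2 / (1 - η) - 1)
  have hnum : |(T ℝ n).eval (2 / (1 - η) * (1 - x) - 1)| ≤ 1 := by
    refine abs_eval_T_real_le_one n (abs_le.mpr ⟨?_, ?_⟩)
    · have : 0 ≤ 2 / (1 - η) * (1 - x) :=
        mul_nonneg (div_nonneg zero_le_two (by linarith)) (by linarith [hx.2])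
      linarith
    · rw [div_mul_eq_mul_div, sub_le_iff_le_add, div_le_iff₀ (by linarith)]
      linarith [hx.1]
  have hden : exp (2 * s * √η) ≤ 2 * D := by
    have h := exp_le_two_mul_eval_T_real (sqrt_nonneg η) (by rwa [sqrt_lt' one_pos, one_pow]) n
    rw [sq_sqrt h0] at h
    refine le_trans (exp_le_exp.mpr ?_) h
    gcongr
    exact Nat.le_ceil s
  have hD : 0 < D := by linarith [one_le_eval_T_two_div_one_sub_sub_one h0 h1 n]
  rw [chebPoly_eval, abs_div, abs_of_pos hD, div_le_iff₀ hD, neg_mul, neg_mul, exp_neg]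
  calc _ ≤ (1 : ℝ) := hnum
    _ = (exp (2 * s * √η))⁻¹ * exp (2 * s * √η) := (inv_mul_cancel₀ (exp_pos _).ne').symm
    _ ≤ (exp (2 * s * √η))⁻¹ * (2 * D) := by gcongr
    _ = _ := by ring

open scoped InnerProductSpace

section Module

variable {R M : Type*} [CommRing R] [TopologicalSpace M] [AddCommGroup M] [Module R M]
  [IsTopologicalAddGroup M] [ContinuousConstSMul R M]

lemma ContinuousLinearMap.aeval_apply_of_apply_eq_smul {A : M →L[R] M} {x : M} {μ : R}
    (h : A x = μ • x) (p : R[X]) : aeval A p x = p.eval μ • x := by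
  induction p using Polynomial.induction_on' with
  | add p q hp hq => simp [hp, hq, add_smul]
  | monomial n a =>
    have hpow : (A ^ n) x = μ ^ n • x := by
      induction n with
      | zero => simp
      | succ n ih => simp [pow_succ', ih, h, smul_smul, mul_comm]
    simp [hpow, smul_smul, Algebra.algebraMap_eq_smul_one]

lemma ContinuousLinearMap.aeval_mul_eq_eval_zero_smul {A P : M →L[R] M}
    (h : ∀ v, A (P v) = 0) (p : R[X]) : aeval A p * P = p.eval 0 • P := by
  ext v
  simp [aeval_apply_of_apply_eq_smul (show A (P v) = (0 : R) • P v by simp [h])]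

end Module

section InnerProductSpace

variable {𝕜 E ι : Type*} [RCLike 𝕜] [NormedAddCommGroup E] [InnerProductSpace 𝕜 E] [Fintype ι]

lemma OrthonormalBasis.inner_apply_of_apply_eq_smul (b : OrthonormalBasis ι 𝕜 E)
    {A : E →L[𝕜] E} {c : ι → 𝕜} (hA : ∀ i, A (b i) = c i • b i) (v : E) (i : ι) :
    ⟪b i, A v⟫_𝕜 = c i * ⟪b i, v⟫_𝕜 := by
  classical
  conv_lhs => rw [← b.sum_repr' v]
  simp [inner_sum, hA, inner_smul_right, orthonormal_iff_ite.mp b.orthonormal, mul_comm]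

lemma OrthonormalBasis.opNorm_le_of_apply_eq_smul (b : OrthonormalBasis ι 𝕜 E)
    {A : E →L[𝕜] E} {c : ι → 𝕜} {M : ℝ} (hM : 0 ≤ M)
    (hA : ∀ i, A (b i) = c i • b i) (hc : ∀ i, ‖c i‖ ≤ M) : ‖A‖ ≤ M := by
  refine A.opNorm_le_bound hM fun v => ?_
  rw [← sq_le_sq₀ (norm_nonneg _) (by positivity), mul_pow, ← b.sum_sq_norm_inner_right,
    ← b.sum_sq_norm_inner_right, Finset.mul_sum]
  gcongr with i
  rw [b.inner_apply_of_apply_eq_smul hA, norm_mul, mul_pow]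
  gcongr
  exact hc i

lemma LinearMap.IsSymmetric.mem_orthogonal_ker_of_apply_eq_smul {T : E →ₗ[𝕜] E}
    (hT : T.IsSymmetric) {v : E} {μ : 𝕜} (hv : T v = μ • v) (hμ : μ ≠ 0) :
    v ∈ (LinearMap.ker T)ᗮ := by
  intro w hw
  have : μ * ⟪w, v⟫_𝕜 = 0 := by
    rw [← inner_smul_right, ← hv, ← hT w v, LinearMap.mem_ker.mp hw, inner_zero_left]
  simpa [hμ] using this

theorem IsSelfAdjoint.norm_aeval_sub_starProjection_ker_le [CompleteSpace E]
    [FiniteDimensional 𝕜 E] {O : E →L[𝕜] E} (hO : IsSelfAdjoint O) {p : ℝ[X]}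
    (hp0 : p.eval 0 = 1) {M : ℝ} (hM : 0 ≤ M)
    (hp : ∀ μ : ℝ, (μ : 𝕜) ∈ spectrum 𝕜 O → μ ≠ 0 → |p.eval μ| ≤ M) :
    ‖aeval O (p.map (algebraMap ℝ 𝕜)) - (LinearMap.ker (O : E →ₗ[𝕜] E)).starProjection‖ ≤ M := by
  have hsym := hO.isSymmetric
  set b := hsym.eigenvectorBasis rfl
  set μ := hsym.eigenvalues rfl
  refine b.opNorm_le_of_apply_eq_smul
    (c := fun i => if μ i = 0 then 0 else ((p.eval (μ i) : ℝ) : 𝕜)) hM (fun i => ?_) (fun i => ?_)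
  · have hOb : O (b i) = (μ i : 𝕜) • b i := hsym.apply_eigenvectorBasis rfl i
    rw [sub_apply, ContinuousLinearMap.aeval_apply_of_apply_eq_smul hOb, eval_map_algebraMap,
      aeval_ofReal]
    split_ifs with hμ
    · rw [Submodule.starProjection_eq_self_iff.mpr (by simp [hOb, hμ]), hμ]
      simp [hp0]
    · rw [(Submodule.starProjection_apply_eq_zero_iff _).mpr
        (hsym.mem_orthogonal_ker_of_apply_eq_smul hOb (by exact_mod_cast hμ))]
      simp
  · split_ifs with hμ
    · simpa using hM
    · have hspec : (μ i : 𝕜) ∈ spectrum 𝕜 O := by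
        rw [ContinuousLinearMap.spectrum_eq]
        exact (hsym.hasEigenvalue_eigenvalues rfl i).mem_spectrum
      simpa using hp _ hspec hμ

end InnerProductSpace

theorem cheb_agsp_general (d : ℕ) (s η : ℝ) (hη : η ∈ Set.Ioo (0 : ℝ) 1)
    (O Pr : EuclideanSpace ℂ (Fin d) →L[ℂ] EuclideanSpace ℂ (Fin d))
    (hO : IsSelfAdjoint O)
    (hspec : ∀ μ : ℝ, (μ : ℂ) ∈ spectrum ℂ O → μ = 0 ∨ μ ∈ Set.Icc η 1)
    (hPr1 : IsIdempotentElem Pr) (hPr2 : IsSelfAdjoint Pr)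
    (hPr3 : LinearMap.range (Pr : EuclideanSpace ℂ (Fin d) →ₗ[ℂ] EuclideanSpace ℂ (Fin d)) =
      LinearMap.ker (O : EuclideanSpace ℂ (Fin d) →ₗ[ℂ] EuclideanSpace ℂ (Fin d))) :
    Polynomial.aeval O ((chebPoly η s).map (algebraMap ℝ ℂ)) * Pr = Pr ∧
      ‖Polynomial.aeval O ((chebPoly η s).map (algebraMap ℝ ℂ)) - Pr‖ ≤
        2 * Real.exp (-2 * s * Real.sqrt η) := by
  obtain rfl : Pr = (LinearMap.ker
      (O : EuclideanSpace ℂ (Fin d) →ₗ[ℂ] EuclideanSpace ℂ (Fin d))).starProjection :=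
    ContinuousLinearMap.IsStarProjection.ext ⟨hPr1, hPr2⟩ isStarProjection_starProjection
      (by rw [hPr3, Submodule.range_starProjection])
  have hp0 := chebPoly_eval_zero hη.1.le hη.2 s
  refine ⟨?_, hO.norm_aeval_sub_starProjection_ker_le hp0 (by positivity) fun μ hμ hμ0 =>
    abs_chebPoly_eval_le hη.1.le hη.2 ((hspec μ hμ).resolve_left hμ0)⟩
  rw [ContinuousLinearMap.aeval_mul_eq_eval_zero_smul
    (fun v => LinearMap.mem_ker.mp (Submodule.starProjection_apply_mem _ v)), eval_zero_map, hp0,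
    map_one, one_smul]

theorem cheb_agsp (d : ℕ) (s η : ℝ) (hs : 0 ≤ s) (hη : η ∈ Set.Ioo (0 : ℝ) 1)
    (O Pr : EuclideanSpace ℂ (Fin d) →L[ℂ] EuclideanSpace ℂ (Fin d))
    (hO : IsSelfAdjoint O)
    (hspec : ∀ μ : ℝ, (μ : ℂ) ∈ spectrum ℂ O → μ = 0 ∨ μ ∈ Set.Icc η 1)
    (hPr1 : IsIdempotentElem Pr) (hPr2 : IsSelfAdjoint Pr)
    (hPr3 : LinearMap.range (Pr : EuclideanSpace ℂ (Fin d) →ₗ[ℂ] EuclideanSpace ℂ (Fin d)) =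
      LinearMap.ker (O : EuclideanSpace ℂ (Fin d) →ₗ[ℂ] EuclideanSpace ℂ (Fin d))) :
    Polynomial.aeval O ((chebPoly η s).map (algebraMap ℝ ℂ)) * Pr = Pr ∧
      ‖Polynomial.aeval O ((chebPoly η s).map (algebraMap ℝ ℂ)) - Pr‖ ≤
        2 * Real.exp (-2 * s * Real.sqrt η) :=
  cheb_agsp_general d s η hη O Pr hO hspec hPr1 hPr2 hPr3
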